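/- arXiv:1505.07254 — 6 statements merged into one kernel-verified Lean document; each statement's English description precedes it below -/
import Mathlib

section
/- Let $\mathbf{d} \sim \mathbf{d}'$ be neighbouring databases in $D^n$ (differing in exactly one coordinate), where $|D| = m+1$. For each $c \in \{0,\dots,n-1\}$, the number of databases $\mathbf{d}^* \in D^n$ satisfying both $h(\mathbf{d},\mathbf{d}^*) = c$ and $h(\mathbf{d}',\mathbf{d}^*) = c+1$ is exactly $\binom{n-1}{c} m^c$. -/
open Finset

/-!
Let `i₀` be the coordinate where the neighbours `d` and `d'` differ. Off `i₀` a word `x` disagrees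
with `d` exactly where it disagrees with `d'`, so `h(d', x) = h(d, x) + 1` forces `x i₀ = d i₀`,
and conversely. The words in question are therefore those agreeing with `d` at `i₀` and disagreeing
with it on exactly `c` of the other `n - 1` coordinates: choose those `c` coordinates, then one of
the `m` other letters at each of them.
-/

section DiffSet

variable {ι D : Type*} [Fintype ι] [DecidableEq D]

def diffSet (d x : ι → D) : Finset ι := {i | d i ≠ x i}

lemma mem_diffSet {d x : ι → D} {i : ι} : i ∈ diffSet d x ↔ d i ≠ x i := by
  simp [diffSet]

lemma card_diffSet (d x : ι → D) : #(diffSet d x) = hammingDist d x := rfl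

variable [DecidableEq ι]

lemma erase_diffSet_eq_of_forall_ne {d d' : ι → D} {i₀ : ι} (h : ∀ j ≠ i₀, d j = d' j) (x : ι → D) :
    (diffSet d x).erase i₀ = (diffSet d' x).erase i₀ := by
  ext j
  simp only [mem_erase, mem_diffSet]
  constructor <;> rintro ⟨hj, hx⟩ <;> simp_all [h j hj]

lemma hammingDist_succ_iff_of_diffSet_eq_singleton {d d' : ι → D} {i₀ : ι}
    (h : diffSet d d' = {i₀}) (x : ι → D) (c : ℕ) :
    hammingDist d x = c ∧ hammingDist d' x = c + 1 ↔
      diffSet d x ⊆ univ.erase i₀ ∧ hammingDist d x = c := by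
  have hne : d i₀ ≠ d' i₀ := mem_diffSet.mp (h ▸ mem_singleton_self i₀)
  have heq : ∀ j ≠ i₀, d j = d' j := fun j hj => by
    by_contra hdj
    exact hj (mem_singleton.mp (h ▸ mem_diffSet.mpr hdj))
  have herase := erase_diffSet_eq_of_forall_ne heq x
  rw [subset_erase, ← card_diffSet, ← card_diffSet]
  simp only [subset_univ, true_and]
  by_cases hi₀ : i₀ ∈ diffSet d x
  · have : #(diffSet d' x) ≤ #(diffSet d x) := by
      have := pred_card_le_card_erase (s := diffSet d' x) (a := i₀)
      rw [← herase, card_erase_of_mem hi₀] at this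
      have := card_pos.mpr ⟨i₀, hi₀⟩
      omega
    simp only [hi₀, not_true_eq_false, false_and, iff_false, not_and]
    omega
  · have hi₀' : i₀ ∈ diffSet d' x := by
      rw [mem_diffSet] at hi₀ ⊢
      exact fun hx => hne (not_not.mp hi₀ ▸ hx.symm)
    rw [← card_erase_add_one hi₀', ← herase, erase_eq_of_notMem hi₀]
    simp [hi₀]

variable [Fintype D]

lemma card_filter_diffSet_eq {m : ℕ} (hcard : Fintype.card D = m + 1) (d : ι → D) (s : Finset ι) :
    #{x : ι → D | diffSet d x = s} = m ^ #s := by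
  have hpi : ({x : ι → D | diffSet d x = s} : Finset (ι → D))
      = Fintype.piFinset (fun i => if i ∈ s then univ.erase (d i) else {d i}) := by
    ext x
    simp only [mem_filter, mem_univ, true_and, Fintype.mem_piFinset, Finset.ext_iff, mem_diffSet]
    refine forall_congr' fun i => ?_
    split_ifs with hi <;> simp [hi, eq_comm]
  rw [hpi, Fintype.card_piFinset]
  simp only [apply_ite card, card_erase_of_mem (mem_univ _), card_univ, hcard, card_singleton,
    Nat.add_sub_cancel, prod_ite_mem, univ_inter, prod_const]

lemma card_filter_diffSet_subset {m : ℕ} (hcard : Fintype.card D = m + 1) (d : ι → D)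
    (T : Finset ι) (c : ℕ) :
    #{x : ι → D | diffSet d x ⊆ T ∧ hammingDist d x = c} = (#T).choose c * m ^ c := by
  have hunion : ({x : ι → D | diffSet d x ⊆ T ∧ hammingDist d x = c} : Finset (ι → D))
      = (powersetCard c T).biUnion fun s => {x | diffSet d x = s} := by
    ext x
    simp only [mem_filter, mem_univ, true_and, mem_biUnion, mem_powersetCard]
    rw [← card_diffSet]
    simp
  rw [hunion, card_biUnion]
  · rw [sum_congr rfl fun s hs => by rw [card_filter_diffSet_eq hcard, (mem_powersetCard.mp hs).2],
      sum_const, card_powersetCard, smul_eq_mul]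
  · intro s _ t _ hst
    exact disjoint_filter.mpr fun x _ hs ht => hst (hs.symm.trans ht)

end DiffSet

theorem stmt_4_general {D : Type*} [Fintype D] [DecidableEq D] (m n : ℕ)
    (hcard : Fintype.card D = m + 1) (d d' : Fin n → D) (hnb : hammingDist d d' = 1)
    (c : ℕ) :
    (Finset.univ.filter (fun x : Fin n → D =>
        hammingDist d x = c ∧ hammingDist d' x = c + 1)).card =
      (n - 1).choose c * m ^ c := by
  obtain ⟨i₀, hi₀⟩ := card_eq_one.mp hnb
  simp_rw [hammingDist_succ_iff_of_diffSet_eq_singleton hi₀]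
  rw [card_filter_diffSet_subset hcard, card_erase_of_mem (mem_univ _), card_univ,
    Fintype.card_fin]

theorem stmt_4 {D : Type*} [Fintype D] [DecidableEq D] (m n : ℕ) (hm : 1 ≤ m) (hn : 1 ≤ n)
    (hcard : Fintype.card D = m + 1) (d d' : Fin n → D) (hnb : hammingDist d d' = 1)
    (c : ℕ) (hc : c ≤ n - 1) :
    (Finset.univ.filter (fun x : Fin n → D =>
        hammingDist d x = c ∧ hammingDist d' x = c + 1)).card =
      (n - 1).choose c * m ^ c :=
  stmt_4_general m n hcard d d' hnb c
end

section
/- Let $\{X_\mathbf{d}\}$ be the discrete exponential mechanism on $D^n$ with $\mathbb{P}(X_\mathbf{d} = \mathbf{d}^*) = (1+me^{-k})^{-n} e^{-k\, h(\mathbf{d},\mathbf{d}^*)}$, $k \ge 0$, and let $0 \le \delta < 1$, $\epsilon \ge 0$. Then the mechanism is $(\epsilon,\delta)$-differentially private (i.e. $\mathbb{P}(X_\mathbf{d} \in A) \le e^\epsilon \mathbb{P}(X_{\mathbf{d}'} \in A) + \delta$ for all neighbouring $\mathbf{d} \sim \mathbf{d}'$ and all $A \subseteq D^n$) if and only if $e^k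 \le \frac{e^\epsilon + m\delta}{1 - \delta}$. -/
open Finset Real

lemma my_expand {D : Type*} [Fintype D] [DecidableEq D] {n : ℕ} (k : ℝ) (d x : Fin n → D) :
    Real.exp (-(k * (hammingDist d x : ℝ))) =
      ∏ i, (if d i = x i then (1:ℝ) else Real.exp (-k)) := by
  have h1 : (hammingDist d x : ℝ) = ∑ i, (if d i = x i then (0:ℝ) else 1) := by
    rw [hammingDist, Finset.card_filter]
    push_cast
    exact Finset.sum_congr rfl (fun i _ => by by_cases h : d i = x i <;> simp [h])
  rw [h1, Finset.mul_sum, ← Finset.sum_neg_distrib, Real.exp_sum]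
  exact Finset.prod_congr rfl (fun i _ => by by_cases h : d i = x i <;> simp [h])

lemma my_inner {D : Type*} [Fintype D] [DecidableEq D] {m : ℕ}
    (hcard : Fintype.card D = m + 1) (k : ℝ) (a : D) :
    ∑ b : D, (if a = b then (1:ℝ) else Real.exp (-k)) = 1 + m * Real.exp (-k) := by
  have : ∀ b : D, (if a = b then (1:ℝ) else Real.exp (-k)) =
      (if a = b then 1 - Real.exp (-k) else 0) + Real.exp (-k) := by
    intro b; by_cases h : a = b <;> simp [h]
  simp only [this, Finset.sum_add_distrib, Finset.sum_ite_eq, Finset.mem_univ, if_pos,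
    Finset.sum_const, Finset.card_univ, hcard, nsmul_eq_mul]
  push_cast; ring

lemma my_slice {D : Type*} [Fintype D] [DecidableEq D] {n m : ℕ}
    (hcard : Fintype.card D = m + 1) (k : ℝ) (d : Fin n → D) (i0 : Fin n) (v : D) :
    ∑ x ∈ Finset.univ.filter (fun x : Fin n → D => x i0 = v),
      ∏ i, (if d i = x i then (1:ℝ) else Real.exp (-k)) =
      (if d i0 = v then (1:ℝ) else Real.exp (-k)) * (1 + m * Real.exp (-k)) ^ (n - 1) := by
  classical
  have hfilter : Finset.univ.filter (fun x : Fin n → D => x i0 = v) =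
      Fintype.piFinset (fun i => if i = i0 then {v} else Finset.univ) := by
    ext x
    simp only [Finset.mem_filter, Finset.mem_univ, true_and, Fintype.mem_piFinset]
    constructor
    · intro hx i
      by_cases h : i = i0
      · subst h; simp [hx]
      · simp [h]
    · intro hx
      have := hx i0
      simpa using this
  rw [hfilter,
    ← Finset.prod_univ_sum (fun i => if i = i0 then ({v} : Finset D) else Finset.univ)
      (fun i b => if d i = b then (1:ℝ) else Real.exp (-k))]
  rw [← Finset.mul_prod_erase Finset.univ _ (Finset.mem_univ i0)]
  have h1 : ∑ b ∈ (if i0 = i0 then ({v} : Finset D) else Finset.univ),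
      (if d i0 = b then (1:ℝ) else Real.exp (-k)) =
      (if d i0 = v then (1:ℝ) else Real.exp (-k)) := by simp
  rw [h1]
  congr 1
  have h2 : ∀ i ∈ Finset.univ.erase i0,
      (∑ b ∈ (if i = i0 then ({v} : Finset D) else Finset.univ),
        (if d i = b then (1:ℝ) else Real.exp (-k))) = 1 + m * Real.exp (-k) := by
    intro i hi
    rw [if_neg (Finset.mem_erase.1 hi).1, my_inner hcard]
  rw [Finset.prod_congr rfl h2, Finset.prod_const, Finset.card_erase_of_mem (Finset.mem_univ i0),
    Finset.card_univ, Fintype.card_fin]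

lemma my_arith (E S s1 s2 t2 eE eK mm δ : ℝ)
    (hE : 0 < E) (hS : 0 ≤ S) (hδ0 : 0 ≤ δ)
    (hEk : eK * E = 1) (heE : 1 ≤ eE)
    (hle : eK * (1 - δ) ≤ eE + mm * δ)
    (hst2 : s2 ≤ t2) (hs1nn : 0 ≤ s1) (ht2nn : 0 ≤ t2)
    (hcs : (1 + mm * E) * (S * s1) ≤ 1) :
    S * (s1 + s2) ≤ eE * (S * (E * s1 + t2)) + δ := by
  have e1 : eK * (1 - δ) * E = 1 - δ := by linear_combination (1 - δ) * hEk
  have t := mul_le_mul_of_nonneg_right hle hE.le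
  rw [e1] at t
  have hkey2 : 1 - eE * E ≤ δ * (1 + mm * E) := by nlinarith [t]
  have hu0 : 0 ≤ S * s1 := mul_nonneg hS hs1nn
  have claim : S * s1 ≤ eE * E * (S * s1) + δ := by
    nlinarith [mul_le_mul_of_nonneg_left hkey2 hu0, mul_le_mul_of_nonneg_left hcs hδ0]
  nlinarith [claim, mul_le_mul_of_nonneg_left hst2 hS,
    mul_nonneg (mul_nonneg (by linarith : (0:ℝ) ≤ eE - 1) hS) ht2nn]

theorem stmt_7 {D : Type*} [Fintype D] [DecidableEq D] (m n : ℕ) (hm : 1 ≤ m) (hn : 1 ≤ n)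
    (hcard : Fintype.card D = m + 1) (k ε δ : ℝ) (hk : 0 ≤ k) (hε : 0 ≤ ε)
    (hδ0 : 0 ≤ δ) (hδ1 : δ < 1)
    (P : (Fin n → D) → (Fin n → D) → ℝ)
    (hP : ∀ a x, P a x = (1 + (m : ℝ) * Real.exp (-k)) ^ (-(n : ℤ)) *
        Real.exp (-(k * (hammingDist a x : ℝ)))) :
    (∀ d d' : Fin n → D, hammingDist d d' = 1 → ∀ A : Finset (Fin n → D),
        ∑ x ∈ A, P d x ≤ Real.exp ε * ∑ x ∈ A, P d' x + δ) ↔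
      Real.exp k ≤ (Real.exp ε + m * δ) / (1 - δ) := by
  have hE : (0:ℝ) < Real.exp (-k) := Real.exp_pos _
  have hE1 : Real.exp (-k) ≤ 1 := Real.exp_le_one_iff.mpr (by linarith)
  have hc : (0:ℝ) < 1 + m * Real.exp (-k) := by positivity
  have hS : (0:ℝ) < (1 + (m:ℝ) * Real.exp (-k)) ^ (-(n : ℤ)) := zpow_pos hc _
  have hEk : Real.exp k * Real.exp (-k) = 1 := by
    rw [← Real.exp_add]; simp
  have hd1 : (0:ℝ) < 1 - δ := by linarith
  have hSc : (1 + (m:ℝ) * Real.exp (-k)) ^ (-(n : ℤ)) * (1 + (m:ℝ) * Real.exp (-k)) ^ (n - 1) =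
      (1 + (m:ℝ) * Real.exp (-k))⁻¹ := by
    have h1 : (1 + (m:ℝ) * Real.exp (-k)) ^ ((n:ℕ) - 1) =
        (1 + (m:ℝ) * Real.exp (-k)) ^ ((n:ℤ) - 1) := by
      rw [← zpow_natCast]; congr 1; omega
    rw [h1, ← zpow_add₀ hc.ne']
    have h2 : -(n:ℤ) + ((n:ℤ) - 1) = -1 := by ring
    rw [h2, zpow_neg_one]
  have hsum : ∀ (d : Fin n → D) (A : Finset (Fin n → D)),
      ∑ x ∈ A, P d x = (1 + (m:ℝ) * Real.exp (-k)) ^ (-(n : ℤ)) *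
        ∑ x ∈ A, ∏ i, (if d i = x i then (1:ℝ) else Real.exp (-k)) := by
    intro d A
    rw [Finset.mul_sum]
    exact Finset.sum_congr rfl (fun x _ => by rw [hP, my_expand])
  constructor
  · intro H
    rw [le_div_iff₀ hd1]
    have hcard1 : 1 < Fintype.card D := by omega
    have : Nontrivial D := Fintype.one_lt_card_iff_nontrivial.mp hcard1
    obtain ⟨a, b, hab⟩ := exists_pair_ne D
    set i0 : Fin n := ⟨0, by omega⟩ with hi0def
    set d : Fin n → D := fun _ => a with hd_def
    set d' : Fin n → D := Function.update d i0 b with hd'_def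
    have hdd' : hammingDist d d' = 1 := by
      have h : (Finset.univ.filter fun i : Fin n => d i ≠ d' i) = {i0} := by
        ext i
        simp only [Finset.mem_filter, Finset.mem_univ, true_and, Finset.mem_singleton,
          hd_def, hd'_def, Function.update_apply]
        by_cases h : i = i0 <;> simp [h, hab]
      show (Finset.univ.filter fun i : Fin n => d i ≠ d' i).card = 1
      rw [h, Finset.card_singleton]
    have key := H d d' hdd' (Finset.univ.filter (fun x : Fin n → D => x i0 = a))
    rw [hsum d, hsum d', my_slice hcard k d i0 a, my_slice hcard k d' i0 a] at key
    have hda : d i0 = a := rfl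
    have hd'a : d' i0 ≠ a := by
      simp only [hd'_def, Function.update_self]
      exact fun h => hab h.symm
    rw [if_pos hda, if_neg hd'a, one_mul] at key
    have key2 : (1 + (m:ℝ) * Real.exp (-k))⁻¹ ≤
        Real.exp ε * (Real.exp (-k) * (1 + (m:ℝ) * Real.exp (-k))⁻¹) + δ := by
      rw [← hSc]
      calc (1 + (m:ℝ) * Real.exp (-k)) ^ (-(n : ℤ)) * (1 + (m:ℝ) * Real.exp (-k)) ^ (n - 1)
          ≤ Real.exp ε * ((1 + (m:ℝ) * Real.exp (-k)) ^ (-(n : ℤ)) *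
            (Real.exp (-k) * (1 + (m:ℝ) * Real.exp (-k)) ^ (n - 1))) + δ := key
        _ = Real.exp ε * (Real.exp (-k) * ((1 + (m:ℝ) * Real.exp (-k)) ^ (-(n : ℤ)) *
            (1 + (m:ℝ) * Real.exp (-k)) ^ (n - 1))) + δ := by ring
    have heq : (Real.exp ε * (Real.exp (-k) * (1 + (m:ℝ) * Real.exp (-k))⁻¹) + δ) *
        (1 + (m:ℝ) * Real.exp (-k)) =
        Real.exp ε * Real.exp (-k) + δ * (1 + (m:ℝ) * Real.exp (-k)) := by
      field_simp
    have h1 : 1 ≤ Real.exp ε * Real.exp (-k) + δ * (1 + (m:ℝ) * Real.exp (-k)) := by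
      have h := mul_le_mul_of_nonneg_right key2 hc.le
      rw [inv_mul_cancel₀ hc.ne', heq] at h
      exact h
    have h2 : Real.exp k * 1 ≤ Real.exp k *
        (Real.exp ε * Real.exp (-k) + δ * (1 + (m:ℝ) * Real.exp (-k))) :=
      mul_le_mul_of_nonneg_left h1 (Real.exp_pos k).le
    have h3 : Real.exp k * (Real.exp ε * Real.exp (-k) + δ * (1 + (m:ℝ) * Real.exp (-k))) =
        Real.exp ε + δ * (Real.exp k + m) := by
      linear_combination (Real.exp ε + δ * (m:ℝ)) * hEk
    nlinarith [h2, h3]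
  · intro hle d d' hdd' A
    have hle' : Real.exp k * (1 - δ) ≤ Real.exp ε + m * δ := by
      have := (le_div_iff₀ hd1).mp hle
      linarith [this]
    have h' : (Finset.univ.filter fun i => d i ≠ d' i).card = 1 := hdd'
    obtain ⟨i0, hi0⟩ := Finset.card_eq_one.mp h'
    have hne : d i0 ≠ d' i0 := by
      have : i0 ∈ Finset.univ.filter fun i => d i ≠ d' i := hi0 ▸ Finset.mem_singleton_self i0
      exact (Finset.mem_filter.mp this).2
    have hoff : ∀ j, j ≠ i0 → d j = d' j := by
      intro j hj
      by_contra hc2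
      have : j ∈ Finset.univ.filter fun i => d i ≠ d' i :=
        Finset.mem_filter.mpr ⟨Finset.mem_univ _, hc2⟩
      rw [hi0, Finset.mem_singleton] at this
      exact hj this
    have hfnn : ∀ (e : Fin n → D) (x : Fin n → D),
        (0:ℝ) ≤ ∏ i, (if e i = x i then (1:ℝ) else Real.exp (-k)) := by
      intro e x
      apply Finset.prod_nonneg
      intro i _
      by_cases h : e i = x i <;> simp [h, hE.le]
    have hA1 : ∀ x : Fin n → D, x i0 = d i0 →
        (∏ i, (if d' i = x i then (1:ℝ) else Real.exp (-k))) =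
          Real.exp (-k) * ∏ i, (if d i = x i then (1:ℝ) else Real.exp (-k)) := by
      intro x hx
      rw [← Finset.mul_prod_erase Finset.univ
          (fun i => if d' i = x i then (1:ℝ) else Real.exp (-k)) (Finset.mem_univ i0),
        ← Finset.mul_prod_erase Finset.univ
          (fun i => if d i = x i then (1:ℝ) else Real.exp (-k)) (Finset.mem_univ i0)]
      have e1 : (if d' i0 = x i0 then (1:ℝ) else Real.exp (-k)) = Real.exp (-k) := by
        rw [if_neg]; rw [hx]; exact fun h => hne h.symm
      have e2 : (if d i0 = x i0 then (1:ℝ) else Real.exp (-k)) = 1 := by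
        rw [if_pos hx.symm]
      rw [e1, e2, one_mul]
      congr 1
      exact Finset.prod_congr rfl fun i hi => by
        rw [hoff i (Finset.mem_erase.1 hi).1]
    have hA2 : ∀ x : Fin n → D, x i0 ≠ d i0 →
        (∏ i, (if d i = x i then (1:ℝ) else Real.exp (-k))) ≤
          ∏ i, (if d' i = x i then (1:ℝ) else Real.exp (-k)) := by
      intro x hx
      apply Finset.prod_le_prod
      · intro i _; by_cases h : d i = x i <;> simp [h, hE.le]
      · intro i _
        by_cases h : i = i0
        · subst h
          rw [if_neg (fun h => hx h.symm)]
          by_cases h2 : d' i = x i <;> simp [h2, hE1]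
        · rw [hoff i h]
    rw [hsum d, hsum d',
      ← Finset.sum_filter_add_sum_filter_not A (fun x => x i0 = d i0)
        (fun x => ∏ i, (if d i = x i then (1:ℝ) else Real.exp (-k))),
      ← Finset.sum_filter_add_sum_filter_not A (fun x => x i0 = d i0)
        (fun x => ∏ i, (if d' i = x i then (1:ℝ) else Real.exp (-k)))]
    have ht1e : (∑ x ∈ A.filter (fun x => x i0 = d i0),
        ∏ i, (if d' i = x i then (1:ℝ) else Real.exp (-k))) =
        Real.exp (-k) * ∑ x ∈ A.filter (fun x => x i0 = d i0),
          ∏ i, (if d i = x i then (1:ℝ) else Real.exp (-k)) := by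
      rw [Finset.mul_sum]
      exact Finset.sum_congr rfl fun x hx => hA1 x (Finset.mem_filter.1 hx).2
    rw [ht1e]
    have hst2 : (∑ x ∈ A.filter (fun x => ¬ x i0 = d i0),
        ∏ i, (if d i = x i then (1:ℝ) else Real.exp (-k))) ≤
        ∑ x ∈ A.filter (fun x => ¬ x i0 = d i0),
          ∏ i, (if d' i = x i then (1:ℝ) else Real.exp (-k)) :=
      Finset.sum_le_sum fun x hx => hA2 x (Finset.mem_filter.1 hx).2
    have hs1nn : (0:ℝ) ≤ ∑ x ∈ A.filter (fun x => x i0 = d i0),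
        ∏ i, (if d i = x i then (1:ℝ) else Real.exp (-k)) :=
      Finset.sum_nonneg fun x _ => hfnn d x
    have ht2nn : (0:ℝ) ≤ ∑ x ∈ A.filter (fun x => ¬ x i0 = d i0),
        ∏ i, (if d' i = x i then (1:ℝ) else Real.exp (-k)) :=
      Finset.sum_nonneg fun x _ => hfnn d' x
    have hs1le : (∑ x ∈ A.filter (fun x => x i0 = d i0),
        ∏ i, (if d i = x i then (1:ℝ) else Real.exp (-k))) ≤
        (1 + (m:ℝ) * Real.exp (-k)) ^ (n - 1) := by
      have hsub : A.filter (fun x => x i0 = d i0) ⊆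
          Finset.univ.filter (fun x : Fin n → D => x i0 = d i0) := by
        intro x hx
        exact Finset.mem_filter.mpr ⟨Finset.mem_univ _, (Finset.mem_filter.1 hx).2⟩
      have h := Finset.sum_le_sum_of_subset_of_nonneg hsub (fun x _ _ => hfnn d x)
      rw [my_slice hcard k d i0 (d i0), if_pos rfl, one_mul] at h
      exact h
    have hcs : (1 + (m:ℝ) * Real.exp (-k)) * ((1 + (m:ℝ) * Real.exp (-k)) ^ (-(n : ℤ)) *
        ∑ x ∈ A.filter (fun x => x i0 = d i0),
          ∏ i, (if d i = x i then (1:ℝ) else Real.exp (-k))) ≤ 1 := by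
      calc (1 + (m:ℝ) * Real.exp (-k)) * ((1 + (m:ℝ) * Real.exp (-k)) ^ (-(n : ℤ)) *
            ∑ x ∈ A.filter (fun x => x i0 = d i0),
              ∏ i, (if d i = x i then (1:ℝ) else Real.exp (-k)))
          ≤ (1 + (m:ℝ) * Real.exp (-k)) * ((1 + (m:ℝ) * Real.exp (-k)) ^ (-(n : ℤ)) *
            (1 + (m:ℝ) * Real.exp (-k)) ^ (n - 1)) :=
            mul_le_mul_of_nonneg_left (mul_le_mul_of_nonneg_left hs1le hS.le) hc.le
        _ = 1 := by rw [hSc, mul_inv_cancel₀ hc.ne']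
    exact my_arith (Real.exp (-k)) _ _ _ _ (Real.exp ε) (Real.exp k) (m:ℝ) δ
      hE hS.le hδ0 hEk (Real.one_le_exp hε) hle' hst2 hs1nn ht2nn hcs
end

section
/- Let $\{X_\mathbf{d}\}$ be the discrete exponential mechanism on $D^n$ with $\mathbb{P}(X_\mathbf{d} = \mathbf{d}^*) = (1+me^{-k})^{-n} e^{-k\, h(\mathbf{d},\mathbf{d}^*)}$, $k \ge 0$, and suppose it is $(\epsilon,\delta)$-differentially private with $0 \le \delta < 1$. Then its error $\mathcal{E} = \max_{\mathbf{d}} \mathbb{E}[h(X_\mathbf{d},\mathbf{d})]$ satisfies $\frac{1-\delta}{1 + e^\epsilon/m} \le \frac{\mathcal{E}}{n} \le \frac{m}{m+1}$. -/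
open Finset Real

theorem stmt_9 {D : Type*} [Fintype D] [DecidableEq D] (m n : ℕ) (hm : 1 ≤ m) (hn : 1 ≤ n)
    (hcard : Fintype.card D = m + 1) (k ε δ : ℝ) (hk : 0 ≤ k) (hε : 0 ≤ ε)
    (hδ0 : 0 ≤ δ) (hδ1 : δ < 1)
    (P : (Fin n → D) → (Fin n → D) → ℝ)
    (hP : ∀ a x, P a x = (1 + (m : ℝ) * Real.exp (-k)) ^ (-(n : ℤ)) *
        Real.exp (-(k * (hammingDist a x : ℝ))))
    (hDP : ∀ d d' : Fin n → D, hammingDist d d' = 1 → ∀ A : Finset (Fin n → D),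
        ∑ x ∈ A, P d x ≤ Real.exp ε * ∑ x ∈ A, P d' x + δ)
    (E : ℝ)
    (hE : IsGreatest (Set.range (fun d : Fin n → D =>
        ∑ x : Fin n → D, (hammingDist d x : ℝ) * P d x)) E) :
    (1 - δ) / (1 + Real.exp ε / m) ≤ E / n ∧ E / n ≤ (m : ℝ) / (m + 1) := by
  set u : ℝ := Real.exp (-k) with hu_def
  have hu : 0 < u := Real.exp_pos _
  have hu1 : u ≤ 1 := by
    rw [hu_def]
    exact Real.exp_le_one_iff.mpr (by linarith)
  set c : ℝ := 1 + (m : ℝ) * u with hc_def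
  have hm1 : (1 : ℝ) ≤ (m : ℝ) := by exact_mod_cast hm
  have hc : 0 < c := by positivity
  have hn0 : (0 : ℝ) < n := by exact_mod_cast hn
  -- hamming distance as a sum
  have hham : ∀ d x : Fin n → D, (hammingDist d x : ℝ) =
      ∑ j, (if d j = x j then (0:ℝ) else 1) := by
    intro d x
    rw [hammingDist, Finset.card_filter]
    push_cast
    refine Finset.sum_congr rfl fun j _ => ?_
    by_cases h : d j = x j <;> simp [h]
  -- factor the exponential of the hamming distance into a product
  have hexp_prod : ∀ d x : Fin n → D, Real.exp (-(k * (hammingDist d x : ℝ))) =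
      ∏ j, (if d j = x j then (1 : ℝ) else u) := by
    intro d x
    have h2 : -(k * (hammingDist d x : ℝ)) = ∑ j, (if d j = x j then (0:ℝ) else -k) := by
      rw [hham, Finset.mul_sum, ← Finset.sum_neg_distrib]
      refine Finset.sum_congr rfl fun j _ => ?_
      by_cases h : d j = x j <;> simp [h]
    rw [h2, Real.exp_sum]
    refine Finset.prod_congr rfl fun j _ => ?_
    by_cases h : d j = x j <;> simp [h, hu_def]
  -- counting lemma over D
  have hcount : ∀ (a : D) (p q : ℝ), ∑ v : D, (if a = v then p else q) = p + m * q := by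
    intro a p q
    have h1 : ∀ v : D, (if a = v then p else q) = q + (if a = v then p - q else 0) := by
      intro v; split_ifs <;> ring
    simp_rw [h1]
    rw [Finset.sum_add_distrib, Finset.sum_const, Finset.sum_ite_eq]
    simp [hcard]
    ring
  -- product helper
  have hprod : ∀ (i : Fin n) (f : Fin n → ℝ), (∀ j, j ≠ i → f j = c) →
      ∏ j, f j = f i * c ^ (n - 1) := by
    intro i f hf
    rw [← Finset.mul_prod_erase univ f (mem_univ i)]
    congr 1
    rw [Finset.prod_congr rfl (fun j hj => hf j (Finset.ne_of_mem_erase hj)),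
      Finset.prod_const]
    congr 1
    simp [Finset.card_erase_of_mem]
  have hpow : c ^ (-(n:ℤ)) * c ^ (n - 1) = c⁻¹ := by
    have h1 : c ^ (n - 1) = c ^ ((n - 1 : ℕ) : ℤ) := by norm_cast
    rw [h1, ← zpow_add₀ hc.ne']
    have h2 : (-(n:ℤ)) + ((n - 1 : ℕ) : ℤ) = -1 := by
      have : ((n - 1 : ℕ) : ℤ) = (n : ℤ) - 1 := by omega
      omega
    rw [h2, zpow_neg_one]
  -- the expectation is constant in d
  have hconst : ∀ d : Fin n → D,
      ∑ x : Fin n → D, (hammingDist d x : ℝ) * P d x = n * ((m : ℝ) * u / c) := by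
    intro d
    have h1 : ∀ x : Fin n → D, (hammingDist d x : ℝ) * P d x =
        ∑ j, (c ^ (-(n:ℤ)) * ((if d j = x j then (0:ℝ) else 1) *
          ∏ i, (if d i = x i then (1:ℝ) else u))) := by
      intro x
      rw [hP, hexp_prod, hham, Finset.sum_mul]
      exact Finset.sum_congr rfl fun j _ => by ring
    simp_rw [h1]
    rw [Finset.sum_comm]
    have h3 : ∀ j : Fin n, ∑ x : Fin n → D,
        (c ^ (-(n:ℤ)) * ((if d j = x j then (0:ℝ) else 1) *
          ∏ i, (if d i = x i then (1:ℝ) else u))) =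
        c ^ (-(n:ℤ)) * ((m : ℝ) * u * c ^ (n - 1)) := by
      intro j
      rw [← Finset.mul_sum]
      congr 1
      have h4 : ∀ x : Fin n → D,
          (if d j = x j then (0:ℝ) else 1) * ∏ i, (if d i = x i then (1:ℝ) else u) =
          ∏ i, (if i = j then (if d i = x i then (0:ℝ) else u)
            else (if d i = x i then (1:ℝ) else u)) := by
        intro x
        conv_rhs => rw [← Finset.mul_prod_erase univ _ (mem_univ j)]
        conv_lhs => rw [← Finset.mul_prod_erase univ
          (fun i => if d i = x i then (1:ℝ) else u) (mem_univ j)]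
        rw [← mul_assoc]
        simp only [if_pos rfl]
        congr 1
        · by_cases h : d j = x j <;> simp [h]
        · exact (Finset.prod_congr rfl fun i hi => by
            simp [Finset.ne_of_mem_erase hi]).symm
      simp_rw [h4]
      rw [← Fintype.prod_sum (f := fun (i : Fin n) (v : D) =>
        if i = j then (if d i = v then (0:ℝ) else u) else (if d i = v then (1:ℝ) else u))]
      rw [hprod j _ ?_]
      · simp only [if_pos rfl, if_true, eq_self_iff_true]
        rw [hcount]
        ring
      · intro i hi
        simp only [if_neg hi]
        rw [hcount]
    simp_rw [h3]
    rw [Finset.sum_const, Finset.card_univ, Fintype.card_fin, nsmul_eq_mul]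
    rw [show c ^ (-(n:ℤ)) * ((m:ℝ) * u * c ^ (n-1)) = (m:ℝ) * u * (c ^ (-(n:ℤ)) * c ^ (n-1))
      from by ring, hpow]
    rw [div_eq_mul_inv]
  -- value of E
  have hEval : E = n * ((m : ℝ) * u / c) := by
    obtain ⟨d0, hd0⟩ := hE.1
    rw [← hd0]
    exact hconst d0
  have hEdiv : E / n = (m : ℝ) * u / c := by
    rw [hEval, mul_comm, mul_div_assoc, div_self hn0.ne', mul_one]
  -- derive the DP inequality e^k(1-δ) ≤ e^ε + mδ
  obtain ⟨a, b, hab⟩ := Fintype.exists_pair_of_one_lt_card (by omega : 1 < Fintype.card D)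
  have hi0 : (0 : ℕ) < n := hn
  set i0 : Fin n := ⟨0, hi0⟩ with hi0_def
  set d : Fin n → D := fun _ => a with hd_def
  set d' : Fin n → D := Function.update d i0 b with hd'_def
  have hd'app : ∀ j, d' j = if j = i0 then b else a := by
    intro j
    rw [hd'_def, Function.update_apply]
  have hdist : hammingDist d d' = 1 := by
    rw [hammingDist]
    have : ({i | d i ≠ d' i} : Finset (Fin n)) = {i0} := by
      ext i
      simp only [mem_filter, mem_univ, true_and, mem_singleton]
      rw [hd'app]
      by_cases h : i = i0 <;> simp [h, hd_def, hab]
    rw [this, Finset.card_singleton]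
  set t : Fin n → Finset D := fun j => if j = i0 then {a} else univ with ht_def
  set A : Finset (Fin n → D) := Fintype.piFinset t with hA_def
  have hsum_gen : ∀ (e : Fin n → D), ∑ x ∈ A, P e x =
      c ^ (-(n:ℤ)) * ∏ j, ∑ v ∈ t j, (if e j = v then (1:ℝ) else u) := by
    intro e
    simp_rw [hP, hexp_prod]
    rw [← Finset.mul_sum, hA_def,
      ← Finset.prod_univ_sum t (fun j v => if e j = v then (1:ℝ) else u)]
  have htsum : ∀ (e : Fin n → D) (j : Fin n), j ≠ i0 →
      ∑ v ∈ t j, (if e j = v then (1:ℝ) else u) = c := by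
    intro e j hj
    rw [ht_def]
    simp only [if_neg hj]
    rw [hcount]
  have hti0 : t i0 = {a} := by rw [ht_def]; simp
  have hSd : ∑ x ∈ A, P d x = c⁻¹ := by
    rw [hsum_gen, hprod i0 _ (htsum d), hti0, Finset.sum_singleton,
      if_pos (show d i0 = a from rfl), one_mul]
    exact hpow
  have hSd' : ∑ x ∈ A, P d' x = u * c⁻¹ := by
    rw [hsum_gen, hprod i0 _ (htsum d'), hti0, Finset.sum_singleton]
    have hb : (if d' i0 = a then (1:ℝ) else u) = u := by
      simp [hd'app, Ne.symm hab]
    rw [hb, show c ^ (-(n:ℤ)) * (u * c ^ (n-1)) = u * (c ^ (-(n:ℤ)) * c ^ (n-1)) from by ring,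
      hpow]
  have hDPval := hDP d d' hdist A
  rw [hSd, hSd'] at hDPval
  have hkey : 1 - δ ≤ Real.exp ε * u + δ * ((m : ℝ) * u) := by
    have h6 := mul_le_mul_of_nonneg_right hDPval hc.le
    rw [inv_mul_cancel₀ hc.ne'] at h6
    have h7 : (Real.exp ε * (u * c⁻¹) + δ) * c = Real.exp ε * u * (c⁻¹ * c) + δ * c := by ring
    rw [h7, inv_mul_cancel₀ hc.ne'] at h6
    rw [hc_def] at h6
    nlinarith [h6]
  constructor
  · rw [hEdiv]
    have hden : (0 : ℝ) < 1 + Real.exp ε / m := by positivity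
    rw [div_le_div_iff₀ hden hc, hc_def]
    have hmne : (m : ℝ) ≠ 0 := by linarith
    have hεm : (m : ℝ) * (Real.exp ε / m) = Real.exp ε := by field_simp
    nlinarith [mul_le_mul_of_nonneg_left hkey (by linarith : (0:ℝ) ≤ (m:ℝ)), hεm, hu.le]
  · rw [hEdiv]
    have hm1pos : (0 : ℝ) < (m : ℝ) + 1 := by linarith
    rw [div_le_div_iff₀ hc hm1pos, hc_def]
    nlinarith [hu1, hm1, hu.le]
end

section
/- Let $|D| = m+1$, $0 < p \le \frac{1}{m+1}$, and define the parent mechanism $\{X_d\}$ by $\mathbb{P}(X_d = d) = 1 - pm$ and $\mathbb{P}(X_d = d') = p$ for $d' \ne d$. Then $\mathbb{P}(X_d \in A) \le e^\epsilon \mathbb{P}(X_{d'} \in A) + \delta$ holds for all $d, d' \in D$ and all $A \subseteq D$ if and only if $p \ge \frac{1-\delta}{e^\epsilon + m}$. -/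
open Finset Real

theorem stmt_13 {D : Type*} [Fintype D] [DecidableEq D] (m : ℕ) (hm : 1 ≤ m)
    (hcard : Fintype.card D = m + 1) (p ε δ : ℝ) (hp0 : 0 < p) (hp1 : p ≤ 1 / (m + 1))
    (hε : 0 ≤ ε) (hδ0 : 0 ≤ δ) (hδ1 : δ ≤ 1)
    (q : D → D → ℝ)
    (hq : ∀ d d' : D, q d d' = if d' = d then 1 - p * m else p) :
    (∀ d d' : D, ∀ A : Finset D,
        ∑ x ∈ A, q d x ≤ Real.exp ε * ∑ x ∈ A, q d' x + δ) ↔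
      p ≥ (1 - δ) / (Real.exp ε + m) := by
  have hm1 : (0:ℝ) < (m:ℝ) + 1 := by positivity
  have hp1' : p * ((m:ℝ) + 1) ≤ 1 := by
    rw [le_div_iff₀ hm1] at hp1; exact hp1
  have hE1 : 1 ≤ Real.exp ε := Real.one_le_exp hε
  have hEm : (0:ℝ) < Real.exp ε + m := by positivity
  have key : ∀ (d : D) (A : Finset D),
      ∑ x ∈ A, q d x = p * A.card + (if d ∈ A then 1 - p * ((m:ℝ) + 1) else 0) := by
    intro d A
    have h1 : ∀ x, q d x = p + (if x = d then 1 - p * ((m:ℝ) + 1) else 0) := by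
      intro x; rw [hq]; split <;> ring
    simp_rw [h1, Finset.sum_add_distrib, Finset.sum_ite_eq' A d, Finset.sum_const,
      nsmul_eq_mul]
    ring
  constructor
  · intro h
    have hnt : 1 < Fintype.card D := by omega
    rw [Fintype.one_lt_card_iff] at hnt
    obtain ⟨d, d', hne⟩ := hnt
    have := h d d' {d}
    rw [key, key] at this
    simp only [Finset.mem_singleton, Finset.card_singleton, Nat.cast_one, if_pos rfl,
      if_neg (Ne.symm hne), if_true] at this
    rw [ge_iff_le, div_le_iff₀ hEm]
    linarith
  · intro h d d' A
    have h' : (1 - δ) ≤ p * (Real.exp ε + m) := by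
      rw [ge_iff_le, div_le_iff₀ hEm] at h; exact h
    rw [key, key]
    have hc0 : (0:ℝ) ≤ A.card := Nat.cast_nonneg _
    have hc : (0:ℝ) ≤ 1 - p * ((m:ℝ) + 1) := by linarith
    have hpA : (0:ℝ) ≤ p * A.card := mul_nonneg hp0.le hc0
    split_ifs with h1 h2 h2
    · nlinarith [mul_nonneg (sub_nonneg.2 hE1) (add_nonneg hpA hc)]
    · have hA1 : (1:ℝ) ≤ A.card := by
        exact_mod_cast Finset.one_le_card.mpr ⟨d, h1⟩
      nlinarith [mul_nonneg (mul_nonneg (sub_nonneg.2 hE1) hp0.le) (sub_nonneg.2 hA1)]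
    · nlinarith [mul_nonneg (sub_nonneg.2 hE1) hpA,
        mul_nonneg (le_trans zero_le_one hE1) hc]
    · nlinarith [mul_nonneg (sub_nonneg.2 hE1) hpA]
end

section
/- Let $|D| = m+1$ and suppose the product sanitisation mechanism with parent $\mathbb{P}(X_d = d) = 1-pm$, $\mathbb{P}(X_d = d') = p$ for $d' \ne d$, $0 \le p \le \frac{1}{m+1}$, is $(\epsilon,\delta)$-differentially private. Then its error $\mathcal{E} = \max_\mathbf{d} \mathbb{E}[h(X_\mathbf{d},\mathbf{d})] = npm$ satisfies $\frac{1-\delta}{1 + e^\epsilon/m} \le \frac{\mathcal{E}}{n} \le \frac{m}{m+1}$. -/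
/-! Under the product mechanism the coordinates of the output are independent, so the expected
Hamming distance is the sum over coordinates of the probability `p * m` that a coordinate is
changed, whatever the input: the error is `n * p * m`. For the lower bound, compare the
neighbouring inputs `(a, a, …, a)` and `(b, a, …, a)` on the event that the first output
coordinate is `a`: its probabilities are `1 - p * m` and `p`, so differential privacy forces
`1 - p * m ≤ exp ε * p + δ`. The upper bound is `p ≤ 1 / (m + 1)`. -/

open Finset Real

theorem hammingDist_update_self {ι : Type*} [Fintype ι] [DecidableEq ι] {γ : ι → Type*}
    [∀ i, DecidableEq (γ i)] (d : ∀ i, γ i) {i : ι} {b : γ i} (h : d i ≠ b) :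
    hammingDist d (Function.update d i b) = 1 := by
  rw [hammingDist, card_eq_one]
  refine ⟨i, ?_⟩
  ext j
  rcases eq_or_ne j i with rfl | hj <;> simp [*]

theorem prod_ite_eq_pow_mul_pow_hammingDist {ι β R : Type*} [Fintype ι] [DecidableEq β]
    [CommMonoid R] (q p : R) (d x : ι → β) :
    ∏ i, (if d i = x i then q else p)
      = q ^ (Fintype.card ι - hammingDist d x) * p ^ hammingDist d x := by
  have hsplit : #{i | d i = x i} + hammingDist d x = Fintype.card ι := by
    simpa [hammingDist] using card_filter_add_card_filter_not (s := univ) (fun i => d i = x i)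
  rw [prod_ite, prod_const, prod_const, ← hsplit, Nat.add_sub_cancel]
  rfl

section ProductWeights

variable {ι β R : Type*} [Fintype ι] [DecidableEq ι] [Fintype β]

theorem sum_mul_prod_of_sum_eq_one [CommSemiring R] (f : ι → β → R)
    (hf : ∀ j, ∑ b, f j b = 1) (i : ι) (g : β → R) :
    ∑ x : ι → β, g (x i) * ∏ j, f j (x j) = ∑ b, g b * f i b := by
  -- absorb `g` into the `i`-th factor, then expand the product of the sums over coordinates
  set f' := Function.update f i (fun b => g b * f i b)
  have hprod : ∀ x : ι → β, g (x i) * ∏ j, f j (x j) = ∏ j, f' j (x j) := by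
    intro x
    rw [← mul_prod_erase univ _ (mem_univ i), ← mul_prod_erase univ _ (mem_univ i),
      ← mul_assoc]
    congr 1
    · simp [f']
    · exact prod_congr rfl fun j hj => by simp [f', ne_of_mem_erase hj]
  have hsum : ∀ j,
      ∑ b, f' j b = Function.update (fun _ => (1 : R)) i (∑ b, g b * f i b) j := by
    intro j
    rcases eq_or_ne j i with rfl | hj
    · simp [f']
    · simp [f', hj, hf]
  simp_rw [hprod, ← Fintype.prod_sum, hsum, prod_update_of_mem (mem_univ i), prod_const_one,
    mul_one]

theorem sum_filter_apply_eq_prod_of_sum_eq_one [DecidableEq β] [CommSemiring R]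
    (f : ι → β → R) (hf : ∀ j, ∑ b, f j b = 1) (i : ι) (a : β) :
    ∑ x : ι → β with x i = a, ∏ j, f j (x j) = f i a := by
  simpa [sum_filter, boole_mul] using
    sum_mul_prod_of_sum_eq_one f hf i fun b => if b = a then 1 else 0

theorem sum_hammingDist_mul_prod_of_sum_eq_one [DecidableEq β] [CommRing R]
    (f : ι → β → R) (hf : ∀ j, ∑ b, f j b = 1) (d : ι → β) :
    ∑ x : ι → β, (hammingDist d x : R) * ∏ j, f j (x j) = ∑ i, (1 - f i (d i)) := by
  have hcoord : ∀ i,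
      ∑ x : ι → β, (if d i ≠ x i then 1 else 0) * ∏ j, f j (x j) = 1 - f i (d i) := by
    intro i
    rw [sum_mul_prod_of_sum_eq_one f hf i fun b => if d i ≠ b then (1 : R) else 0]
    calc ∑ b, (if d i ≠ b then 1 else 0) * f i b
        = ∑ b, f i b - ∑ b, (if d i = b then 1 else 0) * f i b := by
          rw [← sum_sub_distrib]
          exact sum_congr rfl fun b _ => by split_ifs <;> simp_all
      _ = 1 - f i (d i) := by simp [hf]
  simp_rw [hammingDist, natCast_card_filter, sum_mul, ← hcoord]
  exact sum_comm

end ProductWeights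

section ProductMechanism

variable {ι D : Type*} [Fintype ι] [DecidableEq ι] [Fintype D] [DecidableEq D] {m : ℕ}

def parent (p : ℝ) (m : ℕ) (c a : D) : ℝ := if c = a then 1 - p * m else p

def productMechanism (p : ℝ) (m : ℕ) (d x : ι → D) : ℝ := ∏ i, parent p m (d i) (x i)

theorem sum_parent (hcard : Fintype.card D = m + 1) (p : ℝ) (c : D) :
    ∑ a, parent p m c a = 1 := by
  unfold parent
  rw [← add_sum_erase univ _ (mem_univ c),
    sum_congr rfl fun a ha => if_neg (ne_of_mem_erase ha).symm]
  simp only [card_erase_of_mem (mem_univ c), card_univ, hcard, sum_const, nsmul_eq_mul]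
  push_cast
  ring

omit [DecidableEq ι] [Fintype D] in
theorem productMechanism_eq (p : ℝ) (m : ℕ) (d x : ι → D) :
    productMechanism p m d x
      = (1 - p * m) ^ (Fintype.card ι - hammingDist d x) * p ^ hammingDist d x :=
  prod_ite_eq_pow_mul_pow_hammingDist _ _ d x

theorem sum_hammingDist_mul_productMechanism (hcard : Fintype.card D = m + 1) (p : ℝ)
    (d : ι → D) :
    ∑ x, (hammingDist d x : ℝ) * productMechanism p m d x = Fintype.card ι * (p * m) := by
  unfold productMechanism
  rw [sum_hammingDist_mul_prod_of_sum_eq_one _ fun j => sum_parent hcard p (d j)]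
  simp [parent]

theorem one_sub_le_of_productMechanism_dp (hcard : Fintype.card D = m + 1) (hm : 1 ≤ m) (i : ι)
    {p ε δ : ℝ} (hDP : ∀ d d' : ι → D, hammingDist d d' = 1 → ∀ A : Finset (ι → D),
        ∑ x ∈ A, productMechanism p m d x
          ≤ Real.exp ε * ∑ x ∈ A, productMechanism p m d' x + δ) :
    1 - δ ≤ p * (Real.exp ε + m) := by
  obtain ⟨a, b, hab⟩ := Fintype.exists_pair_of_one_lt_card (by omega : 1 < Fintype.card D)
  have hAB := hDP (fun _ => a) (Function.update (fun _ => a) i b) (hammingDist_update_self _ hab)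
    {x | x i = a}
  simp only [productMechanism, sum_filter_apply_eq_prod_of_sum_eq_one _
    fun j => sum_parent hcard p _] at hAB
  simp [parent, hab.symm] at hAB
  linarith

end ProductMechanism

theorem stmt_15_general {D : Type*} [Fintype D] [DecidableEq D] (m n : ℕ) (hm : 1 ≤ m) (hn : 1 ≤ n)
    (hcard : Fintype.card D = m + 1) (p ε δ : ℝ) (hp1 : p ≤ 1 / (m + 1))
    (P : (Fin n → D) → (Fin n → D) → ℝ)
    (hP : ∀ d x, P d x = (1 - p * m) ^ (n - hammingDist d x) * p ^ hammingDist d x)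
    (hDP : ∀ d d' : Fin n → D, hammingDist d d' = 1 → ∀ A : Finset (Fin n → D),
        ∑ x ∈ A, P d x ≤ Real.exp ε * ∑ x ∈ A, P d' x + δ)
    (E : ℝ)
    (hE : IsGreatest (Set.range (fun d : Fin n → D =>
        ∑ x : Fin n → D, (hammingDist d x : ℝ) * P d x)) E) :
    E = n * p * m ∧
      (1 - δ) / (1 + Real.exp ε / m) ≤ E / n ∧ E / n ≤ (m : ℝ) / (m + 1) := by
  obtain rfl : P = productMechanism p m := by
    ext d x
    rw [hP, productMechanism_eq, Fintype.card_fin]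
  have hE_eq : E = n * p * m := by
    obtain ⟨d, rfl⟩ := hE.1
    simp only [sum_hammingDist_mul_productMechanism hcard, Fintype.card_fin, mul_assoc]
  have hEn : E / n = p * m := by
    rw [hE_eq]
    field_simp
  have hpriv := one_sub_le_of_productMechanism_dp hcard hm ⟨0, hn⟩ hDP
  have hm0 : (0 : ℝ) < m := by exact_mod_cast hm
  refine ⟨hE_eq, ?_, ?_⟩
  · rw [hEn, div_le_iff₀ (by positivity)]
    calc 1 - δ ≤ p * (Real.exp ε + m) := hpriv
      _ = p * m * (1 + Real.exp ε / m) := by field_simp; ring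
  · calc E / n = p * m := hEn
      _ ≤ 1 / (m + 1) * m := by gcongr
      _ = m / (m + 1) := by ring

theorem stmt_15 {D : Type*} [Fintype D] [DecidableEq D] (m n : ℕ) (hm : 1 ≤ m) (hn : 1 ≤ n)
    (hcard : Fintype.card D = m + 1) (p ε δ : ℝ) (hp0 : 0 ≤ p) (hp1 : p ≤ 1 / (m + 1))
    (hε : 0 ≤ ε) (hδ0 : 0 ≤ δ) (hδ1 : δ < 1)
    (P : (Fin n → D) → (Fin n → D) → ℝ)
    (hP : ∀ d x, P d x = (1 - p * m) ^ (n - hammingDist d x) * p ^ hammingDist d x)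
    (hDP : ∀ d d' : Fin n → D, hammingDist d d' = 1 → ∀ A : Finset (Fin n → D),
        ∑ x ∈ A, P d x ≤ Real.exp ε * ∑ x ∈ A, P d' x + δ)
    (E : ℝ)
    (hE : IsGreatest (Set.range (fun d : Fin n → D =>
        ∑ x : Fin n → D, (hammingDist d x : ℝ) * P d x)) E) :
    E = n * p * m ∧
      (1 - δ) / (1 + Real.exp ε / m) ≤ E / n ∧ E / n ≤ (m : ℝ) / (m + 1) :=
  stmt_15_general m n hm hn hcard p ε δ hp1 P hP hDP E hE
end

section
/- Let $|D| = m+1$ and let $A$ be the $(m+1)\times(m+1)$ row-stochastic matrix with diagonal entries $a_{jj} = \frac{e^\epsilon + m\delta}{e^\epsilon + m}$ and off-diagonal entries $a_{ij} = \frac{1-\delta}{e^\epsilon + m}$ (i.e. $p = \frac{1-\delta}{e^\epsilon+m}$). Let $B \ne A$ be any row-stochastic matrix defining an $(\epsilon,\delta)$-differentially private parent mechanism, meaning $b_{jj} \le e^\epsilon b_{ij} + \delta$ for all $i \ne j$. Then $\min_j b_{jj} < \min_j a_{jj}$; consequently the error $n(1 - \min_j b_{jj})$ of the product mechanism defined by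 $B$ strictly exceeds the error $n(1 - \min_j a_{jj})$ of the product mechanism defined by $A$. -/
open Finset Real

theorem stmt_16 (m n : ℕ) (hm : 1 ≤ m) (hn : 1 ≤ n) (ε δ : ℝ) (hε : 0 ≤ ε)
    (hδ0 : 0 ≤ δ) (hδ1 : δ < 1)
    (A B : Fin (m + 1) → Fin (m + 1) → ℝ)
    (hA : ∀ i j, A i j = if i = j then (Real.exp ε + m * δ) / (Real.exp ε + m)
        else (1 - δ) / (Real.exp ε + m))
    (hB_nonneg : ∀ i j, 0 ≤ B i j) (hB_stoch : ∀ i, ∑ j, B i j = 1)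
    (hB_dp : ∀ i j, i ≠ j → B j j ≤ Real.exp ε * B i j + δ)
    (hBA : B ≠ A) :
    (Finset.univ.inf' Finset.univ_nonempty (fun j => B j j) <
        Finset.univ.inf' Finset.univ_nonempty (fun j => A j j)) ∧
      (n : ℝ) * (1 - Finset.univ.inf' Finset.univ_nonempty (fun j => A j j)) <
        (n : ℝ) * (1 - Finset.univ.inf' Finset.univ_nonempty (fun j => B j j)) := by
  have hE1 : (1:ℝ) ≤ Real.exp ε := Real.one_le_exp hε
  have hm0 : (0:ℝ) ≤ (m:ℝ) := Nat.cast_nonneg m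
  have hd : (0:ℝ) < Real.exp ε + m := by linarith
  set a : ℝ := (Real.exp ε + m * δ) / (Real.exp ε + m) with ha
  set p : ℝ := (1 - δ) / (Real.exp ε + m) with hp
  have hap : a = 1 - m * p := by rw [ha, hp]; field_simp; ring
  have hEp : a - δ = Real.exp ε * p := by rw [ha, hp]; field_simp; ring
  have hAinf : Finset.univ.inf' Finset.univ_nonempty (fun j : Fin (m+1) => A j j) = a := by
    have hfe : (fun j : Fin (m+1) => A j j) = fun _ => a := funext fun j => by simp [hA j j]
    rw [hfe]
    exact Finset.inf'_const _ _
  have key : Finset.univ.inf' Finset.univ_nonempty (fun j : Fin (m+1) => B j j) < a := by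
    by_contra h
    push_neg at h
    have hdiag : ∀ j, a ≤ B j j := fun j =>
      le_trans h (Finset.inf'_le _ (Finset.mem_univ j))
    have hoff : ∀ i j : Fin (m+1), i ≠ j → p ≤ B i j := by
      intro i j hij
      have h1 := hB_dp i j hij
      have h2 : Real.exp ε * p ≤ Real.exp ε * B i j := by
        have := hdiag j; linarith
      exact le_of_mul_le_mul_left h2 (by linarith)
    apply hBA
    funext i j
    have hcard : (Finset.univ.erase i).card = m := by
      simp [Finset.card_erase_of_mem]
    have hsum : ∑ k ∈ Finset.univ.erase i, B i k + B i i = 1 := by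
      rw [Finset.sum_erase_add _ _ (Finset.mem_univ i)]
      exact hB_stoch i
    have hge : (m : ℝ) * p ≤ ∑ k ∈ Finset.univ.erase i, B i k := by
      have := Finset.card_nsmul_le_sum (Finset.univ.erase i) (fun k => B i k) p
        (fun k hk => hoff i k (fun he => (Finset.mem_erase.mp hk).1 he.symm))
      rwa [hcard, nsmul_eq_mul] at this
    have hBii : a ≤ B i i := hdiag i
    have hsum_eq : ∑ k ∈ Finset.univ.erase i, B i k = (m:ℝ) * p := by
      have : ∑ k ∈ Finset.univ.erase i, B i k ≤ (m:ℝ) * p := by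
        have : B i i ≥ 1 - (m:ℝ) * p := by rw [← hap]; exact hBii
        linarith
      linarith
    have hBiia : B i i = a := by rw [hap]; linarith
    have hzero : ∑ k ∈ Finset.univ.erase i, (B i k - p) = 0 := by
      rw [Finset.sum_sub_distrib, Finset.sum_const, hcard, nsmul_eq_mul, hsum_eq]
      ring
    have heach : ∀ k ∈ Finset.univ.erase i, B i k - p = 0 := by
      rw [← Finset.sum_eq_zero_iff_of_nonneg
        (fun k hk => by have := hoff i k (fun he => (Finset.mem_erase.mp hk).1 he.symm); linarith)]
      exact hzero
    rw [hA i j]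
    by_cases hij : i = j
    · subst hij; simp [hBiia]
    · have hj : j ∈ Finset.univ.erase i := Finset.mem_erase.mpr ⟨fun he => hij he.symm, Finset.mem_univ j⟩
      have := heach j hj
      simp [hij]
      linarith
  rw [hAinf]
  refine ⟨key, ?_⟩
  have hn0 : (0:ℝ) < n := by exact_mod_cast Nat.lt_of_lt_of_le Nat.zero_lt_one hn
  have := mul_lt_mul_of_pos_left (by linarith : 1 - a < 1 - Finset.univ.inf' Finset.univ_nonempty (fun j : Fin (m+1) => B j j)) hn0
  exact this
end
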